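/- Let μ be a non-atomic Borel probability measure whose topological support is exactly F, where F is a fractal subset of [0,1] satisfying the lacunarity condition with constant λ ∈ (0,1], and let a ≥ 2/λ and q ∈ ℝ. Then β(q) = inf{ β ∈ ℝ : limsup_{N→∞} ( Σ_{n=1}^N μ(Ī_n^a)^q |I_n|^β ) / log N = 0 }, where β(q) := inf{ β ∈ ℝ : limsup_{r→0⁺} r^β Σ_{B ∈ B_r^*} μ(B̄^a)^q = 0 }. -/

import Mathlib

open MeasureTheory Filter Set
open scoped Classical

noncomputable section

/-- The enlargement `B̄^a` of the interval `[s,t]` by the factor `1+a` about its centre. -/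
def enlarge (a s t : ℝ) : Set ℝ :=
  Set.Icc (s - a * (t - s) / 2) (t + a * (t - s) / 2)

/-- The moment sum `Σ_{B ∈ B_r^*} μ(B̄^a)^q` over grid intervals of length `r`
whose interior meets the support of `μ` (i.e. with `μ(B) > 0`). -/
def gridSum (μ : Measure ℝ) (a q R : ℝ) : ℝ :=
  ∑' m : ℤ, if 0 < μ (Set.Icc ((m : ℝ) * R) (((m : ℝ) + 1) * R))
    then (μ (enlarge a ((m : ℝ) * R) (((m : ℝ) + 1) * R))).toReal ^ q else 0

/-- The coarse multifractal moment function
`β_a(q) = inf{β : limsup_{r→0⁺} r^β Σ_{B ∈ B_r^*} μ(B̄^a)^q = 0}`.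
(For the nonnegative quantity `r^β · Σ…`, vanishing of the `limsup` as `r → 0⁺`
is the same as convergence to `0`.) -/
def betaA (μ : Measure ℝ) (a q : ℝ) : ℝ :=
  sInf {β : ℝ | Filter.Tendsto (fun R => R ^ β * gridSum μ a q R)
    (nhdsWithin 0 (Set.Ioi 0)) (nhds 0)}

/-- `F` is a "fractal subset" of `[0,1]`: compact, Lebesgue-null, containing `0` and `1`. -/
def IsFractalSubset (F : Set ℝ) : Prop :=
  IsCompact F ∧ F ⊆ Set.Icc 0 1 ∧ (0 : ℝ) ∈ F ∧ (1 : ℝ) ∈ F ∧ MeasureTheory.volume F = 0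

/-- The complementary intervals `I_n = (l n, r n)` of `F` in `[0,1]`, enumerated with
nonincreasing lengths. -/
structure FractalComplement (F : Set ℝ) where
  l : ℕ → ℝ
  r : ℕ → ℝ
  lt : ∀ n, l n < r n
  disj : Pairwise fun n m => Disjoint (Set.Ioo (l n) (r n)) (Set.Ioo (l m) (r m))
  union : (⋃ n, Set.Ioo (l n) (r n)) = Set.Icc (0 : ℝ) 1 \ F
  mono : ∀ n, r (n + 1) - l (n + 1) ≤ r n - l n

/-- The length `|I_n|` of the `n`-th complementary interval. -/
def FractalComplement.len {F : Set ℝ} (c : FractalComplement F) (n : ℕ) : ℝ := c.r n - c.l n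

/-- The enlargement `Ī_n^a` of the closure of the complementary interval `I_n`. -/
def FractalComplement.I {F : Set ℝ} (c : FractalComplement F) (a : ℝ) (n : ℕ) : Set ℝ :=
  enlarge a (c.l n) (c.r n)

/-- The lacunarity condition with constant `lam`: every interval `[x-r, x+r]` with `x ∈ F`
and `0 < r ≤ 1` contains a complementary interval of length at least `lam * r`. -/
def Lacunary {F : Set ℝ} (c : FractalComplement F) (lam : ℝ) : Prop :=
  ∀ x ∈ F, ∀ R : ℝ, 0 < R → R ≤ 1 → ∃ n,
    Set.Ioo (c.l n) (c.r n) ⊆ Set.Icc (x - R) (x + R) ∧ lam * R ≤ c.len n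

/-- The topological support of `μ` is exactly `F`. -/
def HasSupport (μ : Measure ℝ) (F : Set ℝ) : Prop :=
  μ Fᶜ = 0 ∧ ∀ x ∈ F, ∀ ε : ℝ, 0 < ε → 0 < μ (Set.Ioo (x - ε) (x + ε))


/-!
Both infima are taken over sets of exponents each of which, shifted by any `ε > 0`, lands in
the other, so they coincide. The comparison is a double count between grid boxes `B` of size `R`
and complementary intervals `I_n` of length comparable to `R`, each box or interval being chosen
boundedly often. By lacunarity, a box charged by `μ` lies next to such an `I_n`, and
`μ(B̄^a)^q ≤ μ(Ī_n^a)^q` because for `q ≥ 0` the enlarged gap contains `B̄^a`, and for `q < 0` it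
is contained in it. Conversely, next to every `I_n` there is a box with
`μ(Ī_n^a)^q ≲ μ(B̄^a)^q`.

Since `(n + 1) |I_n| ≤ 1`, the intervals of length `≳ R` have index `≲ 1 / R`, so a gap sum
`o(log N)` yields `R^(β + ε) Σ_B μ(B̄^a)^q ≲ R^ε · o(log (1 / R)) → 0`. Conversely, if
`R^β Σ_B μ(B̄^a)^q` is bounded, the intervals of length `≈ 2^-k` contribute `≲ 2^(-kε)` to the
gap sum with exponent `β + ε`, which therefore stays bounded.
-/

open scoped Finset Function

lemma sInf_le_sInf_of_forall_add_mem {A B : Set ℝ}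
    (hAB : ∀ x ∈ A, ∀ ε > 0, x + ε ∈ B) (hBA : ∀ x ∈ B, ∀ ε > 0, x + ε ∈ A) :
    sInf B ≤ sInf A := by
  have bddBelow_of_shift {X Y : Set ℝ} (hXY : ∀ x ∈ X, ∀ ε > 0, x + ε ∈ Y) :
      BddBelow Y → BddBelow X := fun ⟨m, hm⟩ =>
    ⟨m - 1, fun x hx => by linarith [hm (hXY x hx 1 one_pos)]⟩
  rcases A.eq_empty_or_nonempty with rfl | hA
  · have hB : B = ∅ := eq_empty_of_forall_notMem fun x hx => by simpa using hBA x hx 1 one_pos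
    simp [hB]
  by_cases hAb : BddBelow A
  · exact le_csInf hA fun x hx => le_of_forall_pos_le_add fun ε hε =>
      csInf_le (bddBelow_of_shift hBA hAb) (hAB x hx ε hε)
  · rw [Real.sInf_of_not_bddBelow hAb,
      Real.sInf_of_not_bddBelow fun hBb => hAb (bddBelow_of_shift hAB hBb)]

lemma sInf_eq_of_forall_add_mem {A B : Set ℝ}
    (hAB : ∀ x ∈ A, ∀ ε > 0, x + ε ∈ B) (hBA : ∀ x ∈ B, ∀ ε > 0, x + ε ∈ A) :
    sInf A = sInf B :=
  le_antisymm (sInf_le_sInf_of_forall_add_mem hBA hAB) (sInf_le_sInf_of_forall_add_mem hAB hBA)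

lemma Finset.exists_sum_le_mul_sum {ι κ : Type*} [Nonempty κ] {s : Finset ι} {f : ι → ℝ}
    {g : κ → ℝ} {r : ι → κ → Prop} [DecidableRel r] {K : ℝ} (hg : ∀ j, 0 ≤ g j)
    (hsel : ∀ i ∈ s, ∃ j, r i j ∧ f i ≤ g j)
    (hK : ∀ j, (#{i ∈ s | r i j} : ℝ) ≤ K) :
    ∃ t : Finset κ, (∀ j ∈ t, ∃ i, r i j) ∧ ∑ i ∈ s, f i ≤ K * ∑ j ∈ t, g j := by
  choose! φ hφr hφf using hsel
  refine ⟨s.image φ, fun j hj => ?_, ?_⟩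
  · obtain ⟨i, hi, rfl⟩ := Finset.mem_image.1 hj
    exact ⟨i, hφr i hi⟩
  have hfiber (j : κ) : (#{i ∈ s | φ i = j} : ℝ) ≤ K :=
    le_trans (by gcongr with i hi; exact fun h => h ▸ hφr i hi) (hK j)
  calc ∑ i ∈ s, f i ≤ ∑ i ∈ s, g (φ i) := Finset.sum_le_sum hφf
    _ = ∑ j ∈ s.image φ, #{i ∈ s | φ i = j} * g j := by
      rw [← Finset.sum_fiberwise_of_maps_to fun i hi => Finset.mem_image_of_mem φ hi]
      refine Finset.sum_congr rfl fun j _ => ?_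
      rw [Finset.sum_congr rfl fun i hi => by rw [(Finset.mem_filter.1 hi).2],
        Finset.sum_const, nsmul_eq_mul]
    _ ≤ ∑ j ∈ s.image φ, K * g j := by gcongr with j; exacts [hg j, hfiber j]
    _ = K * ∑ j ∈ s.image φ, g j := Finset.mul_sum _ _ _ |>.symm

lemma card_mul_le_of_pairwise_disjoint_Ioo {ι : Type*} {s : Finset ι} {p q : ι → ℝ}
    {δ A B : ℝ} (hδ : 0 ≤ δ) (hAB : A ≤ B) (hlen : ∀ i ∈ s, δ ≤ q i - p i)
    (hsub : ∀ i ∈ s, Ioo (p i) (q i) ⊆ Icc A B)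
    (hdisj : (s : Set ι).Pairwise (Disjoint on fun i => Ioo (p i) (q i))) :
    #s * δ ≤ B - A := by
  have hvol : ENNReal.ofReal (∑ i ∈ s, (q i - p i)) ≤ ENNReal.ofReal (B - A) := by
    rw [ENNReal.ofReal_sum_of_nonneg fun i hi => hδ.trans (hlen i hi), ← Real.volume_Icc]
    simp_rw [← Real.volume_Ioo]
    rw [← measure_biUnion_finset hdisj fun _ _ => measurableSet_Ioo]
    exact measure_mono (iUnion₂_subset hsub)
  calc #s * δ = ∑ _i ∈ s, δ := by rw [Finset.sum_const, nsmul_eq_mul]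
    _ ≤ ∑ i ∈ s, (q i - p i) := Finset.sum_le_sum hlen
    _ ≤ B - A := (ENNReal.ofReal_le_ofReal_iff (sub_nonneg.2 hAB)).1 hvol

lemma le_and_le_of_Ioo_subset_Icc {l r A B : ℝ} (h : l < r) (hs : Ioo l r ⊆ Icc A B) :
    A ≤ l ∧ r ≤ B :=
  (Icc_subset_Icc_iff h.le).1 <| by
    simpa [closure_Ioo h.ne] using closure_minimal hs isClosed_Icc

lemma rpow_le_max_mul_rpow {x u v R : ℝ} (p : ℝ) (hu : 0 < u) (hR : 0 < R)
    (hux : u * R ≤ x) (hxv : x ≤ v * R) : x ^ p ≤ max (u ^ p) (v ^ p) * R ^ p := by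
  rw [max_mul_of_nonneg _ _ (Real.rpow_nonneg hR.le p), ← Real.mul_rpow hu.le hR.le,
    ← Real.mul_rpow (hu.le.trans (le_of_mul_le_mul_right (hux.trans hxv) hR)) hR.le]
  have hx : 0 ≤ x := le_trans (by positivity) hux
  rcases le_or_gt 0 p with hp | hp
  · exact le_max_of_le_right (Real.rpow_le_rpow hx hxv hp)
  · exact le_max_of_le_left (Real.rpow_le_rpow_of_nonpos (by positivity) hux hp.le)

lemma sum_mul_rpow_le {ι : Type*} (s : Finset ι) {t x : ι → ℝ} {u v R : ℝ} (p : ℝ)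
    (hu : 0 < u) (hR : 0 < R) (ht : ∀ i ∈ s, 0 ≤ t i)
    (hx : ∀ i ∈ s, u * R ≤ x i ∧ x i ≤ v * R) :
    ∑ i ∈ s, t i * x i ^ p ≤ max (u ^ p) (v ^ p) * R ^ p * ∑ i ∈ s, t i := by
  rw [Finset.mul_sum]
  refine Finset.sum_le_sum fun i hi => ?_
  rw [mul_comm _ (t i)]
  exact mul_le_mul_of_nonneg_left
    (rpow_le_max_mul_rpow p hu hR (hx i hi).1 (hx i hi).2) (ht i hi)

lemma tendsto_div_rpow_of_tendsto_div_log {S : ℕ → ℝ} {ε : ℝ} (hε : 0 < ε)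
    (hS : Tendsto (fun N : ℕ => S N / Real.log N) atTop (nhds 0)) :
    Tendsto (fun N : ℕ => S N / (N : ℝ) ^ ε) atTop (nhds 0) := by
  have hlog : Tendsto (fun N : ℕ => Real.log N / (N : ℝ) ^ ε) atTop (nhds 0) :=
    (isLittleO_log_rpow_atTop hε).tendsto_div_nhds_zero.comp tendsto_natCast_atTop_atTop
  have hprod := hS.mul hlog
  rw [zero_mul] at hprod
  refine hprod.congr' ?_
  filter_upwards [eventually_ge_atTop 2] with N hN
  have : Real.log N ≠ 0 := (Real.log_pos (by exact_mod_cast hN)).ne'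
  field_simp

lemma tendsto_div_log_of_bounded {S : ℕ → ℝ} {C : ℝ} (hS0 : ∀ N, 0 ≤ S N)
    (hSC : ∀ N, S N ≤ C) : Tendsto (fun N : ℕ => S N / Real.log N) atTop (nhds 0) := by
  have hlog : Tendsto (fun N : ℕ => Real.log N) atTop atTop :=
    Real.tendsto_log_atTop.comp tendsto_natCast_atTop_atTop
  refine squeeze_zero' ?_ ?_ (tendsto_const_nhds (x := C).div_atTop hlog)
  · filter_upwards with N using div_nonneg (hS0 N) (Real.log_natCast_nonneg N)
  · filter_upwards with N using div_le_div_of_nonneg_right (hSC N) (Real.log_natCast_nonneg N)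

lemma sum_le_of_forall_dyadic_scale {ι : Type*} (s : Finset ι) {x f : ι → ℝ} {u ρ A ε : ℝ}
    (hρ : 0 < ρ) (hA : 0 ≤ A) (hε : 0 < ε) (hx : ∀ i ∈ s, 0 < x i ∧ x i < u * ρ)
    (hscale : ∀ k : ℕ, ∀ t ⊆ s, (∀ i ∈ t, u * (ρ / 2 ^ (k + 1)) ≤ x i ∧
      x i ≤ 2 * u * (ρ / 2 ^ (k + 1))) → ∑ i ∈ t, f i ≤ A * (ρ / 2 ^ (k + 1)) ^ ε) :
    ∑ i ∈ s, f i ≤ A * ρ ^ ε * (1 - (1 / 2 : ℝ) ^ ε)⁻¹ := by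
  have hlevel (i : ι) (hi : i ∈ s) : ∃ k : ℕ, u * (ρ / 2 ^ (k + 1)) ≤ x i ∧
      x i ≤ 2 * u * (ρ / 2 ^ (k + 1)) := by
    obtain ⟨hx0, hxu⟩ := hx i hi
    obtain ⟨k, hk1, hk2⟩ := exists_nat_pow_near (x := u * ρ / x i) (y := 2)
      ((one_le_div hx0).2 hxu.le) one_lt_two
    rw [le_div_iff₀ hx0] at hk1
    rw [div_lt_iff₀ hx0] at hk2
    refine ⟨k, ?_, ?_⟩
    · rw [mul_div_assoc', div_le_iff₀ (by positivity)]
      linarith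
    · rw [mul_div_assoc', le_div_iff₀ (by positivity), pow_succ]
      linarith
  choose! κ hκ using hlevel
  set r : ℝ := (1 / 2) ^ ε
  have hr0 : 0 ≤ r := by positivity
  have hr1 : r < 1 := Real.rpow_lt_one (by norm_num) (by norm_num) hε
  have hscale_le (k : ℕ) : (ρ / 2 ^ (k + 1)) ^ ε ≤ ρ ^ ε * r ^ k := by
    rw [div_eq_mul_one_div, ← one_div_pow, Real.mul_rpow hρ.le (by positivity),
      ← Real.rpow_pow_comm (by norm_num), pow_succ]
    gcongr
    exact mul_le_of_le_one_right (pow_nonneg hr0 k) hr1.le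
  calc ∑ i ∈ s, f i = ∑ k ∈ s.image κ, ∑ i ∈ s with κ i = k, f i :=
        (Finset.sum_fiberwise_of_maps_to (fun i hi => Finset.mem_image_of_mem κ hi) f).symm
    _ ≤ ∑ k ∈ s.image κ, A * ρ ^ ε * r ^ k := by
      refine Finset.sum_le_sum fun k _ => (hscale k _ (Finset.filter_subset _ s) ?_).trans ?_
      · intro i hi
        obtain ⟨his, rfl⟩ := Finset.mem_filter.1 hi
        exact hκ i his
      · rw [mul_assoc]
        exact mul_le_mul_of_nonneg_left (hscale_le k) hA
    _ = A * ρ ^ ε * ∑ k ∈ s.image κ, r ^ k := (Finset.mul_sum _ _ _).symm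
    _ ≤ A * ρ ^ ε * (1 - r)⁻¹ := by
      gcongr
      rw [← tsum_geometric_of_lt_one hr0 hr1]
      exact (summable_geometric_of_lt_one hr0 hr1).sum_le_tsum _ fun k _ => pow_nonneg hr0 k

namespace FractalComplement

variable {F : Set ℝ} (c : FractalComplement F)

lemma len_pos (n : ℕ) : 0 < c.len n := sub_pos.2 (c.lt n)

lemma len_def (n : ℕ) :
    c.len n = c.r n - c.l n := rfl

lemma I_eq (a : ℝ) (n : ℕ) :
    c.I a n = Icc (c.l n - a * c.len n / 2) (c.r n + a * c.len n / 2) := rfl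

lemma Ioo_subset (n : ℕ) : Ioo (c.l n) (c.r n) ⊆ Icc 0 1 \ F :=
  c.union ▸ subset_iUnion (fun n => Ioo (c.l n) (c.r n)) n

lemma l_nonneg_and_r_le_one (n : ℕ) : 0 ≤ c.l n ∧ c.r n ≤ 1 :=
  le_and_le_of_Ioo_subset_Icc (c.lt n) ((c.Ioo_subset n).trans sdiff_subset)

lemma l_mem (n : ℕ) : c.l n ∈ F := by
  by_contra hF
  obtain ⟨hl0, hr1⟩ := c.l_nonneg_and_r_le_one n
  have hmem : c.l n ∈ ⋃ m, Ioo (c.l m) (c.r m) := c.union ▸ ⟨⟨hl0, (c.lt n).le.trans hr1⟩, hF⟩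
  obtain ⟨m, hm⟩ := mem_iUnion.1 hmem
  have hmn : m ≠ n := by rintro rfl; exact lt_irrefl _ hm.1
  refine not_disjoint_iff_nonempty_inter.2 ?_ (c.disj hmn)
  rw [Ioo_inter_Ioo, nonempty_Ioo, max_lt_iff, lt_min_iff, lt_min_iff]
  exact ⟨⟨c.lt m, hm.1.trans (c.lt n)⟩, hm.2, c.lt n⟩

lemma len_antitone : Antitone c.len :=
  antitone_nat_of_succ_le c.mono

lemma succ_mul_len_le_one (n : ℕ) : ((n : ℝ) + 1) * c.len n ≤ 1 := by
  have hcount := card_mul_le_of_pairwise_disjoint_Ioo (s := Finset.range (n + 1))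
    (c.len_pos n).le zero_le_one
    (fun k hk => c.len_antitone (Nat.lt_succ_iff.1 (Finset.mem_range.1 hk)))
    (fun k _ => (c.Ioo_subset k).trans sdiff_subset) (fun i _ j _ hij => c.disj hij)
  simpa using hcount

lemma lt_floor_of_le_len {w : ℝ} (hw : 0 < w) {n : ℕ} (h : w ≤ c.len n) : n < ⌊1 / w⌋₊ := by
  have hn : ((n : ℝ) + 1) * w ≤ 1 :=
    (mul_le_mul_of_nonneg_left h (by positivity)).trans (c.succ_mul_len_le_one n)
  exact Nat.lt_of_succ_le (Nat.le_floor (by push_cast; rwa [le_div_iff₀ hw]))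

lemma card_filter_abs_l_sub_le (s : Finset ℕ) (x : ℝ) {d w R : ℝ} (hd : 0 ≤ d) (hw : 0 < w)
    (hR : 0 < R)
    (hs : ∀ n ∈ s, w * R ≤ c.len n) :
    (#{n ∈ s | |c.l n - x| ≤ d * R} : ℝ) ≤ 2 * d / w + 1 := by
  have hcount := card_mul_le_of_pairwise_disjoint_Ioo (s := {n ∈ s | |c.l n - x| ≤ d * R})
    (p := c.l) (q := fun n => c.l n + w * R) (δ := w * R)
    (A := x - d * R) (B := x + d * R + w * R) (by positivity) (by nlinarith)
    (fun n _ => (add_sub_cancel_left _ _).ge)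
    (fun n hn y hy => by
      have := abs_le.1 (Finset.mem_filter.1 hn).2
      exact ⟨by linarith [hy.1], by linarith [hy.2]⟩)
    (fun i hi j hj hij => (c.disj hij).mono
      (Ioo_subset_Ioo_right (by linarith [hs i (Finset.mem_filter.1 hi).1, c.len_def i]))
      (Ioo_subset_Ioo_right (by linarith [hs j (Finset.mem_filter.1 hj).1, c.len_def j])))
  rw [div_add_one hw.ne', le_div_iff₀ hw]
  exact le_of_mul_le_mul_right (by linarith) hR

end FractalComplement

def gridBox (R : ℝ) (m : ℤ) : Set ℝ := Icc (m * R) ((m + 1) * R)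

def gridTerm (μ : Measure ℝ) (a q R : ℝ) (m : ℤ) : ℝ :=
  if 0 < μ (gridBox R m) then (μ (enlarge a (m * R) ((m + 1) * R))).toReal ^ q else 0

lemma gridSum_eq_tsum (μ : Measure ℝ) (a q R : ℝ) :
    gridSum μ a q R = ∑' m, gridTerm μ a q R m := rfl

lemma gridTerm_nonneg (μ : Measure ℝ) (a q R : ℝ) (m : ℤ) : 0 ≤ gridTerm μ a q R m := by
  unfold gridTerm; split_ifs <;> positivity

lemma gridSum_nonneg (μ : Measure ℝ) (a q R : ℝ) : 0 ≤ gridSum μ a q R :=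
  tsum_nonneg (gridTerm_nonneg μ a q R)

lemma enlarge_gridBox (a R : ℝ) (m : ℤ) :
    enlarge a (m * R) ((m + 1) * R) = Icc (m * R - a * R / 2) ((m + 1) * R + a * R / 2) := by
  unfold enlarge; congr 1 <;> ring

lemma mem_gridBox_floor {R : ℝ} (hR : 0 < R) (y : ℝ) : y ∈ gridBox R ⌊y / R⌋ :=
  ⟨(le_div_iff₀ hR).1 (Int.floor_le _), (div_le_iff₀ hR).1 (Int.lt_floor_add_one _).le⟩

lemma pairwise_disjoint_Ioo_grid (R : ℝ) :
    Pairwise (Disjoint on fun m : ℤ => Ioo (m * R) ((m + 1) * R)) := by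
  simpa [zsmul_eq_mul, add_mul] using pairwise_disjoint_Ioo_add_zsmul (0 : ℝ) R

lemma card_filter_abs_sub_mul_le (s : Finset ℤ) (x : ℝ) {d R : ℝ} (hd : 0 ≤ d) (hR : 0 < R) :
    (#(s.filter fun m : ℤ => |x - m * R| ≤ d * R) : ℝ) ≤ 2 * d + 1 := by
  have hcount := card_mul_le_of_pairwise_disjoint_Ioo
    (s := s.filter fun m : ℤ => |x - m * R| ≤ d * R)
    (A := x - d * R) (B := x + d * R + R)
    hR.le (by nlinarith) (fun m _ => by ring_nf; rfl)
    (fun m hm y hy => by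
      have := abs_le.1 (Finset.mem_filter.1 hm).2
      exact ⟨by linarith [hy.1], by linarith [hy.2]⟩)
    (fun i _ j _ hij => pairwise_disjoint_Ioo_grid R hij)
  exact le_of_mul_le_mul_right (by linarith) hR

lemma exists_gridBox_measure_ge (μ : Measure ℝ) [IsFiniteMeasure μ] {L T R : ℝ} (hR : 0 < R)
    (hLT : L ≤ T) : ∃ m : ℤ, L - R < m * R ∧ m * R ≤ T ∧
      (μ (Icc L T)).toReal ≤ ((T - L) / R + 2) * (μ (gridBox R m)).toReal := by
  set boxes := Finset.Icc ⌊L / R⌋ ⌊T / R⌋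
  have hcover : Icc L T ⊆ ⋃ m ∈ boxes, gridBox R m := fun y hy =>
    mem_biUnion (Finset.mem_Icc.2 ⟨Int.floor_mono (by gcongr; exact hy.1),
      Int.floor_mono (by gcongr; exact hy.2)⟩) (mem_gridBox_floor hR y)
  obtain ⟨m, hm, hmax⟩ := boxes.exists_max_image (fun m => (μ (gridBox R m)).toReal)
    (Finset.nonempty_Icc.2 (Int.floor_mono (by gcongr)))
  obtain ⟨hLm, hmT⟩ := Finset.mem_Icc.1 hm
  have hcard : (#boxes : ℝ) ≤ (T - L) / R + 2 := by
    have hcardZ : (#boxes : ℤ) = ⌊T / R⌋ + 1 - ⌊L / R⌋ := by rw [Int.card_Icc]; omega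
    have hcardR : (#boxes : ℝ) = ⌊T / R⌋ + 1 - ⌊L / R⌋ := by exact_mod_cast hcardZ
    rw [hcardR, sub_div]
    linarith [Int.floor_le (T / R), Int.sub_one_lt_floor (L / R)]
  refine ⟨m, ?_, ?_, ?_⟩
  · have h := (Int.sub_one_lt_floor (L / R)).trans_le (Int.cast_le.2 hLm)
    have : L / R < m + 1 := by linarith
    rw [div_lt_iff₀ hR] at this
    linarith
  · exact (le_div_iff₀ hR).1 ((Int.cast_le.2 hmT).trans (Int.floor_le _))
  calc (μ (Icc L T)).toReal ≤ ∑ m ∈ boxes, (μ (gridBox R m)).toReal := by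
        rw [← ENNReal.toReal_sum fun _ _ => measure_ne_top μ _]
        exact ENNReal.toReal_mono (ENNReal.sum_ne_top.2 fun _ _ => measure_ne_top μ _)
          ((measure_mono hcover).trans (measure_biUnion_finset_le _ _))
    _ ≤ #boxes * (μ (gridBox R m)).toReal := by
        simpa using Finset.sum_le_card_nsmul boxes _ _ hmax
    _ ≤ ((T - L) / R + 2) * (μ (gridBox R m)).toReal := by gcongr

namespace HasSupport

variable {μ : Measure ℝ} {F : Set ℝ}

lemma exists_mem_of_measure_pos (hsupp : HasSupport μ F) {s : Set ℝ} (hs : 0 < μ s) :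
    ∃ x ∈ F, x ∈ s := by
  by_contra! h
  exact hs.ne' (measure_mono_null (fun x hxs hxF => h x hxF hxs) hsupp.1)

lemma measure_I_pos (hsupp : HasSupport μ F) (c : FractalComplement F) {a : ℝ} (ha : 0 < a)
    (n : ℕ) : 0 < μ (c.I a n) := by
  have hlen := c.len_pos n
  refine (hsupp.2 _ (c.l_mem n) (a * c.len n / 2) (by positivity)).trans_le (measure_mono ?_)
  rw [c.I_eq]
  exact Ioo_subset_Icc_self.trans (Icc_subset_Icc le_rfl (by linarith [c.lt n]))

lemma mem_Icc_of_measure_gridBox_pos (hsupp : HasSupport μ F) (hF : F ⊆ Icc 0 1) {R : ℝ}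
    (hR : 0 < R) {m : ℤ} (hm : 0 < μ (gridBox R m)) : m ∈ Finset.Icc (-1) ⌊1 / R⌋ := by
  obtain ⟨x, hxF, hx1, hx2⟩ := hsupp.exists_mem_of_measure_pos hm
  obtain ⟨hx0, hx1'⟩ := hF hxF
  have hm1 : (-1 : ℝ) ≤ m := by
    linarith [le_of_mul_le_mul_right (by linarith : 0 * R ≤ (m + 1) * R) hR]
  refine Finset.mem_Icc.2 ⟨by exact_mod_cast hm1, Int.le_floor.2 ?_⟩
  rw [le_div_iff₀ hR]
  linarith

variable {a q R : ℝ}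

lemma gridSum_eq_sum (hsupp : HasSupport μ F) (hF : F ⊆ Icc 0 1) (hR : 0 < R) :
    gridSum μ a q R =
      ∑ m ∈ Finset.Icc (-1) ⌊1 / R⌋ with 0 < μ (gridBox R m), gridTerm μ a q R m := by
  rw [gridSum_eq_tsum]
  refine tsum_eq_sum fun m hm => ?_
  rw [gridTerm, if_neg]
  exact fun hpos => hm (Finset.mem_filter.2 ⟨hsupp.mem_Icc_of_measure_gridBox_pos hF hR hpos, hpos⟩)

lemma sum_gridTerm_le_gridSum (hsupp : HasSupport μ F) (hF : F ⊆ Icc 0 1) (hR : 0 < R)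
    (t : Finset ℤ) : ∑ m ∈ t, gridTerm μ a q R m ≤ gridSum μ a q R :=
  have hsummable : Summable (gridTerm μ a q R) := summable_of_ne_finset_zero fun m hm => by
    rw [gridTerm, if_neg fun hpos => hm (hsupp.mem_Icc_of_measure_gridBox_pos hF hR hpos)]
  hsummable.sum_le_tsum t fun m _ => gridTerm_nonneg μ a q R m

lemma exists_gridBox_near [IsFiniteMeasure μ] (hsupp : HasSupport μ F) {x : ℝ} (hR : 0 < R)
    (hx : x ∈ F) :
    ∃ m : ℤ, 0 < μ (gridBox R m) ∧ |x - m * R| ≤ 2 * R := by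
  obtain ⟨m, hm1, hm2, hμ⟩ := exists_gridBox_measure_ge μ (L := x - R) (T := x + R) hR (by linarith)
  have hpos : 0 < (μ (Icc (x - R) (x + R))).toReal :=
    ENNReal.toReal_pos ((hsupp.2 x hx R hR).trans_le (measure_mono Ioo_subset_Icc_self)).ne'
      (measure_ne_top μ _)
  refine ⟨m, ?_, abs_le.2 ⟨by linarith, by linarith⟩⟩
  by_contra! h0
  rw [nonpos_iff_eq_zero.1 h0, ENNReal.toReal_zero, mul_zero] at hμ
  linarith

end HasSupport

section GridTerm

variable {μ : Measure ℝ} [IsFiniteMeasure μ] {a q R : ℝ} {m : ℤ} {S : Set ℝ}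

lemma gridTerm_le_of_enlarge_subset (hq : 0 ≤ q)
    (h : enlarge a (m * R) ((m + 1) * R) ⊆ S) : gridTerm μ a q R m ≤ (μ S).toReal ^ q := by
  unfold gridTerm
  split_ifs
  · exact Real.rpow_le_rpow ENNReal.toReal_nonneg
      (ENNReal.toReal_mono (measure_ne_top μ S) (measure_mono h)) hq
  · positivity

lemma gridTerm_le_of_subset_enlarge (hq : q ≤ 0) (hS : 0 < μ S)
    (h : S ⊆ enlarge a (m * R) ((m + 1) * R)) : gridTerm μ a q R m ≤ (μ S).toReal ^ q := by
  unfold gridTerm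
  split_ifs
  · exact Real.rpow_le_rpow_of_nonpos (ENNReal.toReal_pos hS.ne' (measure_ne_top μ S))
      (ENNReal.toReal_mono (measure_ne_top μ _) (measure_mono h)) hq
  · positivity

lemma rpow_le_gridTerm_of_enlarge_subset (hq : q ≤ 0) (ha : 0 ≤ a) (hR : 0 < R)
    (hm : 0 < μ (gridBox R m)) (h : enlarge a (m * R) ((m + 1) * R) ⊆ S) :
    (μ S).toReal ^ q ≤ gridTerm μ a q R m := by
  have hbox : gridBox R m ⊆ enlarge a (m * R) ((m + 1) * R) := by
    rw [enlarge_gridBox]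
    exact Icc_subset_Icc (by nlinarith) (by nlinarith)
  rw [gridTerm, if_pos hm]
  exact Real.rpow_le_rpow_of_nonpos
    (ENNReal.toReal_pos (hm.trans_le (measure_mono hbox)).ne' (measure_ne_top μ _))
    (ENNReal.toReal_mono (measure_ne_top μ S) (measure_mono h)) hq

end GridTerm

namespace Lacunary

variable {F : Set ℝ} {c : FractalComplement F} {lam : ℝ} {μ : Measure ℝ} {a q R ρ : ℝ} {m : ℤ}

lemma exists_gap_near_gridBox (hlac : Lacunary c lam) (hsupp : HasSupport μ F) (hρ : 0 < ρ)
    (hρ1 : ρ ≤ 1) (hm : 0 < μ (gridBox R m)) :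
    ∃ n, m * R - ρ ≤ c.l n ∧ c.r n ≤ (m + 1) * R + ρ ∧ lam * ρ ≤ c.len n ∧ c.len n ≤ 2 * ρ := by
  obtain ⟨x, hxF, hx1, hx2⟩ := hsupp.exists_mem_of_measure_pos hm
  obtain ⟨n, hsub, hlen⟩ := hlac x hxF ρ hρ hρ1
  obtain ⟨hl, hr⟩ := le_and_le_of_Ioo_subset_Icc (c.lt n) hsub
  exact ⟨n, by linarith, by linarith, hlen, by rw [c.len_def]; linarith⟩

variable [IsFiniteMeasure μ]

/-- For `q ≥ 0` the selected gap is long enough for `Ī_n^a` to swallow `B̄^a`. -/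
lemma exists_gap_gridTerm_le_of_nonneg (hlac : Lacunary c lam) (hsupp : HasSupport μ F)
    (hq : 0 ≤ q) (ha0 : 0 < a) (ha : 2 ≤ a * lam) (hR : 0 < R) (hρ : 0 < ρ) (hρ1 : ρ ≤ 1)
    (hρR : (2 + a) * R = 2 * lam * ρ) (hm : 0 < μ (gridBox R m)) :
    ∃ n, (lam * ρ ≤ c.len n ∧ c.len n ≤ 2 * ρ ∧ |c.l n - m * R| ≤ R + ρ) ∧
      gridTerm μ a q R m ≤ (μ (c.I a n)).toReal ^ q := by
  obtain ⟨n, hl, hr, hlen, hlen2⟩ := hlac.exists_gap_near_gridBox hsupp hρ hρ1 hm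
  have hlen' := c.len_def n
  have hlr := c.lt n
  have hlong : 2 * ρ ≤ a * c.len n := by
    nlinarith [mul_le_mul_of_nonneg_left hlen ha0.le]
  refine ⟨n, ⟨hlen, hlen2, abs_le.2 ⟨by linarith, by linarith⟩⟩,
    gridTerm_le_of_enlarge_subset hq ?_⟩
  rw [enlarge_gridBox, c.I_eq]
  exact Icc_subset_Icc (by linarith) (by linarith)

/-- For `q < 0` the selected gap is short enough for `Ī_n^a` to fit inside `B̄^a`. -/
lemma exists_gap_gridTerm_le_of_neg (hlac : Lacunary c lam) (hsupp : HasSupport μ F)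
    (hq : q < 0) (ha : 0 < a) (hR : 0 < R) (hρ : 0 < ρ) (hρ1 : ρ ≤ 1)
    (hρR : 2 * (1 + a) * ρ = a * R)
    (hm : 0 < μ (gridBox R m)) :
    ∃ n, (lam * ρ ≤ c.len n ∧ c.len n ≤ 2 * ρ ∧ |c.l n - m * R| ≤ R + ρ) ∧
      gridTerm μ a q R m ≤ (μ (c.I a n)).toReal ^ q := by
  obtain ⟨n, hl, hr, hlen, hlen2⟩ := hlac.exists_gap_near_gridBox hsupp hρ hρ1 hm
  have hlen' := c.len_def n
  have hlr := c.lt n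
  have hshort := mul_le_mul_of_nonneg_left hlen2 ha.le
  refine ⟨n, ⟨hlen, hlen2, abs_le.2 ⟨by linarith, by linarith⟩⟩,
    gridTerm_le_of_subset_enlarge hq.le (hsupp.measure_I_pos c ha n) ?_⟩
  rw [enlarge_gridBox, c.I_eq]
  exact Icc_subset_Icc (by linarith) (by linarith)

lemma exists_gridSum_le_mul_sum (hlac : Lacunary c lam) (hsupp : HasSupport μ F)
    (hF : F ⊆ Icc 0 1) (hlam : 0 < lam) (ha : 2 ≤ a * lam) (q : ℝ) :
    ∃ w W K R₀ : ℝ, 0 < w ∧ 0 ≤ K ∧ 0 < R₀ ∧ ∀ R, 0 < R → R ≤ R₀ →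
      ∃ s : Finset ℕ, (∀ n ∈ s, w * R ≤ c.len n ∧ c.len n ≤ W * R) ∧
        gridSum μ a q R ≤ K * ∑ n ∈ s, (μ (c.I a n)).toReal ^ q := by
  have ha0 : 0 < a := by nlinarith
  obtain ⟨ρc, hρc, hsel⟩ : ∃ ρc : ℝ, 0 < ρc ∧ ∀ R, 0 < R → ρc * R ≤ 1 →
      ∀ m : ℤ, 0 < μ (gridBox R m) → ∃ n,
        (lam * (ρc * R) ≤ c.len n ∧ c.len n ≤ 2 * (ρc * R) ∧ |c.l n - m * R| ≤ R + ρc * R) ∧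
          gridTerm μ a q R m ≤ (μ (c.I a n)).toReal ^ q := by
    rcases le_or_gt 0 q with hq | hq
    · refine ⟨(2 + a) / (2 * lam), by positivity, fun R hR hR1 m hm =>
        hlac.exists_gap_gridTerm_le_of_nonneg hsupp hq ha0 ha hR (by positivity) hR1 ?_ hm⟩
      field_simp
    · refine ⟨a / (2 * (1 + a)), by positivity, fun R hR hR1 m hm =>
        hlac.exists_gap_gridTerm_le_of_neg hsupp hq ha0 hR (by positivity) hR1 ?_ hm⟩
      field_simp
  refine ⟨lam * ρc, 2 * ρc, 2 * (1 + ρc) + 1, 1 / ρc, by positivity, by positivity,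
    by positivity, fun R hR hR₀ => ?_⟩
  have hρR : ρc * R ≤ 1 := by rwa [le_div_iff₀ hρc, mul_comm] at hR₀
  rw [hsupp.gridSum_eq_sum hF hR]
  set boxes := {m ∈ Finset.Icc (-1) ⌊1 / R⌋ | 0 < μ (gridBox R m)}
  have hfiber (n : ℕ) : (#{m ∈ boxes | (lam * (ρc * R) ≤ c.len n ∧ c.len n ≤ 2 * (ρc * R) ∧
      |c.l n - (m : ℤ) * R| ≤ R + ρc * R)} : ℝ) ≤ 2 * (1 + ρc) + 1 := by
    have hcount := card_filter_abs_sub_mul_le boxes (c.l n) (d := 1 + ρc) (by positivity) hR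
    refine le_trans (Nat.cast_le.2 (Finset.card_le_card (Finset.monotone_filter_right _ ?_))) hcount
    exact fun m _ h => h.2.2.trans_eq (by ring)
  obtain ⟨s, hs, hsum⟩ := Finset.exists_sum_le_mul_sum (s := boxes)
    (r := fun m n => lam * (ρc * R) ≤ c.len n ∧ c.len n ≤ 2 * (ρc * R) ∧
      |c.l n - m * R| ≤ R + ρc * R)
    (fun n => Real.rpow_nonneg ENNReal.toReal_nonneg q)
    (fun m hm => hsel R hR hρR m (Finset.mem_filter.1 hm).2) hfiber
  refine ⟨s, fun n hn => ?_, hsum⟩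
  obtain ⟨m, hlen, hlen2, -⟩ := hs n hn
  constructor <;> linarith

lemma exists_rpow_mul_gridSum_le (hlac : Lacunary c lam) (hsupp : HasSupport μ F)
    (hF : F ⊆ Icc 0 1) (hlam : 0 < lam) (ha : 2 ≤ a * lam) {β ε : ℝ} (hε : 0 ≤ ε) :
    ∃ w C R₁ : ℝ, 0 < w ∧ 0 < R₁ ∧ ∀ R, 0 < R → R ≤ R₁ →
      R ^ (β + ε) * gridSum μ a q R ≤ C *
        ((∑ n ∈ Finset.range ⌊1 / (w * R)⌋₊, (μ (c.I a n)).toReal ^ q * c.len n ^ β) /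
          (⌊1 / (w * R)⌋₊ : ℝ) ^ ε) := by
  obtain ⟨w, W, K, R₀, hw, hK, hR₀, hkey⟩ := hlac.exists_gridSum_le_mul_sum hsupp hF hlam ha q
  set Cw := max (w ^ (-β)) (W ^ (-β))
  refine ⟨w, K * Cw * (1 / w) ^ ε, min R₀ (1 / w), hw, by positivity, fun R hR hR₁ => ?_⟩
  set M := ⌊1 / (w * R)⌋₊
  set S := ∑ n ∈ Finset.range M, (μ (c.I a n)).toReal ^ q * c.len n ^ β
  have hterm (n : ℕ) : 0 ≤ (μ (c.I a n)).toReal ^ q * c.len n ^ β :=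
    mul_nonneg (by positivity) (Real.rpow_nonneg (c.len_pos n).le _)
  have hwR : w * R ≤ 1 := by rw [← le_div_iff₀' hw]; exact hR₁.trans (min_le_right _ _)
  obtain ⟨s, hs, hgrid⟩ := hkey R hR (hR₁.trans (min_le_left _ _))
  have hM : 0 < (M : ℝ) :=
    Nat.cast_pos.2 (Nat.floor_pos.2 (by rwa [le_div_iff₀ (by positivity), one_mul]))
  have hsum : ∑ n ∈ s, (μ (c.I a n)).toReal ^ q ≤ Cw * R ^ (-β) * S := by
    calc ∑ n ∈ s, (μ (c.I a n)).toReal ^ q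
        = ∑ n ∈ s, (μ (c.I a n)).toReal ^ q * c.len n ^ β * c.len n ^ (-β) := by
          refine Finset.sum_congr rfl fun n _ => ?_
          rw [mul_assoc, ← Real.rpow_add (c.len_pos n), add_neg_cancel, Real.rpow_zero, mul_one]
      _ ≤ Cw * R ^ (-β) * ∑ n ∈ s, (μ (c.I a n)).toReal ^ q * c.len n ^ β :=
        sum_mul_rpow_le s _ hw hR (fun n _ => hterm n) hs
      _ ≤ Cw * R ^ (-β) * S := by
        gcongr
        refine Finset.sum_le_sum_of_subset_of_nonneg (fun n hn => ?_) fun n _ _ => hterm n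
        exact Finset.mem_range.2 (c.lt_floor_of_le_len (by positivity) (hs n hn).1)
  have hRε : R ^ ε ≤ (1 / w) ^ ε / (M : ℝ) ^ ε := by
    rw [← Real.div_rpow (by positivity) hM.le]
    refine Real.rpow_le_rpow hR.le ?_ hε
    have hMle : (M : ℝ) ≤ 1 / (w * R) := Nat.floor_le (by positivity)
    rw [le_div_iff₀ hM]
    calc R * M ≤ R * (1 / (w * R)) := by gcongr
      _ = 1 / w := by field_simp
  have hS : 0 ≤ S := Finset.sum_nonneg fun n _ => hterm n
  calc R ^ (β + ε) * gridSum μ a q R ≤ R ^ (β + ε) * (K * (Cw * R ^ (-β) * S)) := by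
        gcongr
        exact hgrid.trans (by gcongr)
    _ = K * Cw * S * R ^ ε := by
      rw [Real.rpow_add hR, Real.rpow_neg hR.le]
      field_simp
    _ ≤ K * Cw * S * ((1 / w) ^ ε / (M : ℝ) ^ ε) := by gcongr
    _ = K * Cw * (1 / w) ^ ε * (S / (M : ℝ) ^ ε) := by ring

lemma tendsto_gridSum_of_tendsto_sum_div_log (hlac : Lacunary c lam) (hsupp : HasSupport μ F)
    (hF : F ⊆ Icc 0 1) (hlam : 0 < lam) {β ε : ℝ} (ha : 2 ≤ a * lam) (hε : 0 < ε)
    (hβ : Tendsto (fun N : ℕ =>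
        (∑ n ∈ Finset.range N, (μ (c.I a n)).toReal ^ q * c.len n ^ β) / Real.log N)
      atTop (nhds 0)) :
    Tendsto (fun R => R ^ (β + ε) * gridSum μ a q R) (nhdsWithin 0 (Ioi 0)) (nhds 0) := by
  obtain ⟨w, C, R₁, hw, hR₁, hbound⟩ :=
    hlac.exists_rpow_mul_gridSum_le hsupp hF hlam ha (β := β) hε.le
  have hM : Tendsto (fun R : ℝ => ⌊1 / (w * R)⌋₊) (nhdsWithin 0 (Ioi 0)) atTop := by
    refine tendsto_nat_floor_atTop.comp ?_
    simpa [mul_inv, one_div, mul_comm] using tendsto_inv_nhdsGT_zero.const_mul_atTop (inv_pos.2 hw)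
  have hlim := ((tendsto_div_rpow_of_tendsto_div_log hε hβ).comp hM).const_mul C
  rw [mul_zero] at hlim
  refine squeeze_zero' ?_ ?_ hlim
  · filter_upwards [self_mem_nhdsWithin] with R (hR : 0 < R)
    exact mul_nonneg (by positivity) (gridSum_nonneg μ a q R)
  · filter_upwards [self_mem_nhdsWithin, nhdsWithin_le_nhds (eventually_le_nhds hR₁)]
      with R (hR : 0 < R) hRR₁
    exact hbound R hR hRR₁

end Lacunary

namespace HasSupport

variable {μ : Measure ℝ} [IsFiniteMeasure μ] {F : Set ℝ} (c : FractalComplement F)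
  {a q R : ℝ} {n : ℕ}

/-- For `q ≥ 0`: `Ī_n^a` is covered by boundedly many grid boxes, the heaviest of which
controls its measure. -/
lemma exists_gridTerm_ge_of_nonneg (hsupp : HasSupport μ F) (hq : 0 ≤ q) (ha : 0 < a)
    (hR : 0 < R) (hlen : c.len n ≤ 2 * R) :
    ∃ m : ℤ, |c.l n - m * R| ≤ (2 + a) * R ∧
      (μ (c.I a n)).toReal ^ q ≤ (2 * a + 4) ^ q * gridTerm μ a q R m := by
  have hlen0 := c.len_pos n
  have hlen' := c.len_def n
  have hshort := mul_le_mul_of_nonneg_left hlen ha.le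
  obtain ⟨m, hm1, hm2, hμ⟩ := exists_gridBox_measure_ge μ
    (L := c.l n - a * c.len n / 2) (T := c.r n + a * c.len n / 2) hR (by nlinarith)
  rw [← c.I_eq] at hμ
  have hP : (c.r n + a * c.len n / 2 - (c.l n - a * c.len n / 2)) / R + 2 ≤ 2 * a + 4 := by
    rw [div_add' _ _ _ hR.ne', div_le_iff₀ hR]
    nlinarith
  have hI := ENNReal.toReal_pos (hsupp.measure_I_pos c ha n).ne' (measure_ne_top μ _)
  have hbox : 0 < μ (gridBox R m) := by
    by_contra! h0
    rw [nonpos_iff_eq_zero.1 h0, ENNReal.toReal_zero, mul_zero] at hμ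
    linarith
  refine ⟨m, abs_le.2 ⟨by nlinarith, by nlinarith⟩, ?_⟩
  rw [gridTerm, if_pos hbox, ← Real.mul_rpow (by positivity) ENNReal.toReal_nonneg]
  refine Real.rpow_le_rpow hI.le (hμ.trans ?_) hq
  gcongr
  · exact measure_ne_top μ _
  · rw [enlarge_gridBox]
    exact Icc_subset_Icc (by nlinarith) (by nlinarith)

/-- For `q < 0`: `Ī_n^a` of a long gap swallows `B̄^a` for a nearby box of positive mass. -/
lemma exists_gridTerm_ge_of_neg (hsupp : HasSupport μ F) (hq : q < 0) (ha : 0 < a)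
    (hR : 0 < R) (hlen : (6 + a) * R ≤ a * c.len n) :
    ∃ m : ℤ, |c.l n - m * R| ≤ 2 * R ∧ (μ (c.I a n)).toReal ^ q ≤ gridTerm μ a q R m := by
  obtain ⟨m, hm, hnear⟩ := hsupp.exists_gridBox_near hR (c.l_mem n)
  obtain ⟨h1, h2⟩ := abs_le.1 hnear
  refine ⟨m, hnear, rpow_le_gridTerm_of_enlarge_subset hq.le ha.le hR hm ?_⟩
  rw [enlarge_gridBox, c.I_eq]
  exact Icc_subset_Icc (by linarith) (by linarith [c.lt n])

lemma exists_sum_le_mul_gridSum (hsupp : HasSupport μ F) (hF : F ⊆ Icc 0 1) (ha : 0 < a)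
    (q : ℝ) : ∃ w K : ℝ, 0 < w ∧ 0 ≤ K ∧ ∀ R, 0 < R → ∀ s : Finset ℕ,
      (∀ n ∈ s, w * R ≤ c.len n ∧ c.len n ≤ 2 * w * R) →
        ∑ n ∈ s, (μ (c.I a n)).toReal ^ q ≤ K * gridSum μ a q R := by
  obtain ⟨w, d, C, hw, hd, hC, hsel⟩ : ∃ w d C : ℝ, 0 < w ∧ 0 ≤ d ∧ 0 ≤ C ∧
      ∀ R, 0 < R → ∀ n, w * R ≤ c.len n → c.len n ≤ 2 * w * R → ∃ m : ℤ,
        |c.l n - m * R| ≤ d * R ∧ (μ (c.I a n)).toReal ^ q ≤ C * gridTerm μ a q R m := by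
    rcases le_or_gt 0 q with hq | hq
    · exact ⟨1, 2 + a, (2 * a + 4) ^ q, one_pos, by positivity, by positivity,
        fun R hR n _ h2 => hsupp.exists_gridTerm_ge_of_nonneg c hq ha hR (by linarith)⟩
    · refine ⟨(6 + a) / a, 2, 1, by positivity, zero_le_two, zero_le_one, fun R hR n h1 _ => ?_⟩
      rw [div_mul_eq_mul_div, div_le_iff₀' ha] at h1
      simpa using hsupp.exists_gridTerm_ge_of_neg c hq ha hR h1
  refine ⟨w, (2 * d / w + 1) * C, hw, by positivity, fun R hR s hs => ?_⟩
  obtain ⟨t, -, hsum⟩ := Finset.exists_sum_le_mul_sum (s := s)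
    (r := fun n (m : ℤ) => |c.l n - m * R| ≤ d * R) (g := fun m => C * gridTerm μ a q R m)
    (fun m => mul_nonneg hC (gridTerm_nonneg μ a q R m))
    (fun n hn => hsel R hR n (hs n hn).1 (hs n hn).2)
    (fun m => c.card_filter_abs_l_sub_le s (m * R) hd hw hR fun n hn => (hs n hn).1)
  calc ∑ n ∈ s, (μ (c.I a n)).toReal ^ q
      ≤ (2 * d / w + 1) * ∑ m ∈ t, C * gridTerm μ a q R m := hsum
    _ = (2 * d / w + 1) * C * ∑ m ∈ t, gridTerm μ a q R m := by rw [← Finset.mul_sum, mul_assoc]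
    _ ≤ (2 * d / w + 1) * C * gridSum μ a q R := by
      gcongr
      exact hsupp.sum_gridTerm_le_gridSum hF hR t

lemma tendsto_sum_div_log_of_tendsto_gridSum (hsupp : HasSupport μ F) (hF : F ⊆ Icc 0 1)
    {β ε : ℝ} (ha : 0 < a) (hε : 0 < ε)
    (hβ : Tendsto (fun R => R ^ β * gridSum μ a q R) (nhdsWithin 0 (Ioi 0)) (nhds 0)) :
    Tendsto (fun N : ℕ =>
        (∑ n ∈ Finset.range N, (μ (c.I a n)).toReal ^ q * c.len n ^ (β + ε)) / Real.log N)
      atTop (nhds 0) := by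
  obtain ⟨w, K, hw, hK, hkey⟩ := hsupp.exists_sum_le_mul_gridSum c hF ha q
  obtain ⟨ρ, hρ : 0 < ρ, hgrid⟩ :=
    mem_nhdsGT_iff_exists_Ioc_subset.1 (hβ.eventually (ge_mem_nhds one_pos))
  set f : ℕ → ℝ := fun n => (μ (c.I a n)).toReal ^ q * c.len n ^ (β + ε)
  have hf0 (n : ℕ) : 0 ≤ f n := mul_nonneg (by positivity) (Real.rpow_nonneg (c.len_pos n).le _)
  set Cm := max (w ^ (β + ε)) ((2 * w) ^ (β + ε))
  have hscale (k : ℕ) (s : Finset ℕ) (hs : ∀ n ∈ s, w * (ρ / 2 ^ (k + 1)) ≤ c.len n ∧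
      c.len n ≤ 2 * w * (ρ / 2 ^ (k + 1))) : ∑ n ∈ s, f n ≤ Cm * K * (ρ / 2 ^ (k + 1)) ^ ε := by
    set R := ρ / 2 ^ (k + 1)
    have hR : 0 < R := by positivity
    have hRρ : R ≤ ρ := div_le_self hρ.le (one_le_pow₀ one_le_two)
    have hgridR : R ^ β * gridSum μ a q R ≤ 1 := hgrid ⟨hR, hRρ⟩
    calc ∑ n ∈ s, f n ≤ Cm * R ^ (β + ε) * ∑ n ∈ s, (μ (c.I a n)).toReal ^ q :=
          sum_mul_rpow_le s _ hw hR (fun n _ => by positivity)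
            fun n hn => ⟨(hs n hn).1, by linarith [(hs n hn).2]⟩
      _ ≤ Cm * R ^ (β + ε) * (K * gridSum μ a q R) := by gcongr; exact hkey R hR s hs
      _ = Cm * K * R ^ ε * (R ^ β * gridSum μ a q R) := by
        rw [Real.rpow_add hR]; ring
      _ ≤ Cm * K * R ^ ε := by
        exact mul_le_of_le_one_right (by positivity) hgridR
  set Nbig := ⌊1 / (w * ρ)⌋₊
  refine tendsto_div_log_of_bounded (C := ∑ n ∈ Finset.range Nbig, f n +
    Cm * K * ρ ^ ε * (1 - (1 / 2 : ℝ) ^ ε)⁻¹) (fun N => Finset.sum_nonneg fun n _ => hf0 n)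
    fun N => ?_
  rw [← Finset.sum_filter_not_add_sum_filter (Finset.range N) (fun n => c.len n < w * ρ)]
  refine add_le_add ?_ ?_
  · refine Finset.sum_le_sum_of_subset_of_nonneg (fun n hn => ?_) fun n _ _ => hf0 n
    exact Finset.mem_range.2 (c.lt_floor_of_le_len (by positivity)
      (not_lt.1 (Finset.mem_filter.1 hn).2))
  · exact sum_le_of_forall_dyadic_scale _ hρ (by positivity) hε
      (fun n hn => ⟨c.len_pos n, (Finset.mem_filter.1 hn).2⟩)
      fun k s _ hs => hscale k s hs

end HasSupport

theorem stmt_12_general (F : Set ℝ) (hF : IsFractalSubset F) (c : FractalComplement F)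
    (lam : ℝ) (hlam0 : 0 < lam) (hlac : Lacunary c lam)
    (μ : Measure ℝ) [IsProbabilityMeasure μ] (hsupp : HasSupport μ F)
    (q a : ℝ) (ha : 2 / lam ≤ a) :
    betaA μ a q =
      sInf {β : ℝ | Filter.Tendsto
        (fun N : ℕ =>
          (∑ n ∈ Finset.range N, (μ (c.I a n)).toReal ^ q * c.len n ^ β) / Real.log N)
        Filter.atTop (nhds 0)} := by
  have halam : 2 ≤ a * lam := by rwa [div_le_iff₀ hlam0] at ha
  have ha0 : 0 < a := lt_of_lt_of_le (by positivity) ha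
  exact sInf_eq_of_forall_add_mem
    (fun _ hβ _ hε => hsupp.tendsto_sum_div_log_of_tendsto_gridSum c hF.2.1 ha0 hε hβ)
    (fun _ hβ _ hε => hlac.tendsto_gridSum_of_tendsto_sum_div_log hsupp hF.2.1 hlam0 halam hε hβ)

/-- the moment function `β(q)` equals the infimum of those `β` for which
`(Σ_{n<N} μ(Ī_n^a)^q |I_n|^β)/log N → 0` (equation (beta2) of Proposition 4.4; for these
nonnegative quantities, vanishing of the `limsup` is the same as convergence to `0`). -/
theorem stmt_12 (F : Set ℝ) (hF : IsFractalSubset F) (c : FractalComplement F)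
    (lam : ℝ) (hlam0 : 0 < lam) (hlam1 : lam ≤ 1) (hlac : Lacunary c lam)
    (μ : Measure ℝ) [IsProbabilityMeasure μ] [NullSingletonClass μ] (hsupp : HasSupport μ F)
    (q a : ℝ) (ha : 2 / lam ≤ a) :
    betaA μ a q =
      sInf {β : ℝ | Filter.Tendsto
        (fun N : ℕ =>
          (∑ n ∈ Finset.range N, (μ (c.I a n)).toReal ^ q * c.len n ^ β) / Real.log N)
        Filter.atTop (nhds 0)} :=
  stmt_12_general F hF c lam hlam0 hlac μ hsupp q a ha
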